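/- Let X be a Banach function space on I such that the Copson space C*X is nontrivial. Then there exist 0 < a < b < m(I) such that for all f ∈ C*X with supp(f) ⊂ [a,b]: ‖χ_{[0,a]}‖_X · ‖f‖_{L¹(1/t)} ≤ ‖f‖_{C*X} ≤ ‖χ_{[0,b]}‖_X · ‖f‖_{L¹(1/t)}, where ‖f‖_{L¹(1/t)} = ∫_I |f(t)|/t dt. -/

import Mathlib

open MeasureTheory Filter Set
open scoped ENNReal

noncomputable section

/-- A Banach function space (Banach ideal space) of measurable functions on `I ⊆ ℝ`,
with the ideal property. -/
structure BanachFunctionSpace (I : Set ℝ) where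
  Mem : (ℝ → ℝ) → Prop
  norm : (ℝ → ℝ) → ℝ
  mem_congr : ∀ f g : ℝ → ℝ, (∀ᵐ x ∂(volume.restrict I), f x = g x) → Mem f → Mem g
  zero_mem : Mem 0
  add_mem : ∀ f g, Mem f → Mem g → Mem (f + g)
  smul_mem : ∀ (c : ℝ) (f), Mem f → Mem (c • f)
  norm_nonneg : ∀ f, 0 ≤ norm f
  norm_zero : norm 0 = 0
  norm_eq_zero : ∀ f, Mem f → norm f = 0 → (∀ᵐ x ∂(volume.restrict I), f x = 0)
  norm_add_le : ∀ f g, Mem f → Mem g → norm (f + g) ≤ norm f + norm g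
  norm_smul : ∀ (c : ℝ) (f), norm (c • f) = |c| * norm f
  ideal_mem : ∀ f g, (∀ᵐ x ∂(volume.restrict I), |f x| ≤ |g x|) → Mem g → Mem f
  ideal_norm : ∀ f g, (∀ᵐ x ∂(volume.restrict I), |f x| ≤ |g x|) → Mem g → norm f ≤ norm g
  complete : ∀ f : ℕ → (ℝ → ℝ), (∀ n, Mem (f n)) →
      (∀ ε : ℝ, 0 < ε → ∃ N, ∀ m ≥ N, ∀ n ≥ N, norm (f m - f n) < ε) →
      ∃ g, Mem g ∧ Tendsto (fun n => norm (f n - g)) atTop (nhds 0)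

/-- The Cesàro operator `Cf(x) = (1/x) ∫₀ˣ |f(t)| dt`, with values in `[0,∞]`. -/
def ces (f : ℝ → ℝ) (x : ℝ) : ℝ≥0∞ :=
  ENNReal.ofReal (1/x) * ∫⁻ t in Set.Ioc (0:ℝ) x, ENNReal.ofReal |f t|

/-- The real-valued version of `C|f|`. -/
def cesR (f : ℝ → ℝ) : ℝ → ℝ := fun x => (ces f x).toReal

/-- The Copson operator `C*f(x) = ∫_{I ∩ [x,∞)} |f(t)|/t dt`, with values in `[0,∞]`. -/
def cop (I : Set ℝ) (f : ℝ → ℝ) (x : ℝ) : ℝ≥0∞ :=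
  ∫⁻ t in I ∩ Set.Ici x, ENNReal.ofReal (|f t| / t)

/-- The real-valued version of `C*|f|`. -/
def copR (I : Set ℝ) (f : ℝ → ℝ) : ℝ → ℝ := fun x => (cop I f x).toReal

/-- Membership in the Cesàro space `CX`: `C|f|` is a.e. finite on `I` and belongs to `X`. -/
def MemCX (I : Set ℝ) (X : BanachFunctionSpace I) (f : ℝ → ℝ) : Prop :=
  (∀ᵐ x ∂(volume.restrict I), ces f x ≠ ⊤) ∧ X.Mem (cesR f)

/-- Membership in the Copson space `C*X`. -/
def MemCopX (I : Set ℝ) (X : BanachFunctionSpace I) (f : ℝ → ℝ) : Prop :=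
  (∀ᵐ x ∂(volume.restrict I), cop I f x ≠ ⊤) ∧ X.Mem (copR I f)

/-- Boundedness of the Cesàro operator on `X`. -/
def CBounded (I : Set ℝ) (X : BanachFunctionSpace I) : Prop :=
  ∃ M : ℝ, ∀ f, X.Mem f → MemCX I X f ∧ X.norm (cesR f) ≤ M * X.norm f


/-!
A nonzero `f₀ ∈ C*X` has `0 < C*f₀(b) < ∞` for some small `b > 0`. Since `C*f₀` is decreasing,
`C*f₀ ≥ C*f₀(b) · χ_{[0,b]}`, so `χ_{[0,b]} ∈ X` by the ideal property. Take `a = b / 2`. If `f` is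
supported in `[a,b]`, then `C*f` equals `‖f‖_{L¹(1/t)}` on `[0,a]`, is at most `‖f‖_{L¹(1/t)}`
everywhere and vanishes beyond `b`; that is,
`‖f‖_{L¹(1/t)} χ_{[0,a]} ≤ C*f ≤ ‖f‖_{L¹(1/t)} χ_{[0,b]}`, and the ideal property of the norm
gives both inequalities.
-/

open Function

namespace BanachFunctionSpace

variable {I : Set ℝ} (X : BanachFunctionSpace I)

lemma mem_of_smul_mem {c : ℝ} (hc : c ≠ 0) {f : ℝ → ℝ} (h : X.Mem (c • f)) : X.Mem f := by
  simpa [smul_smul, inv_mul_cancel₀ hc] using X.smul_mem c⁻¹ _ h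

lemma norm_smul_of_nonneg {c : ℝ} (hc : 0 ≤ c) (f : ℝ → ℝ) : X.norm (c • f) = c * X.norm f := by
  rw [X.norm_smul, abs_of_nonneg hc]

lemma mem_indicator_one_of_subset {s t : Set ℝ} (hst : s ⊆ t)
    (ht : X.Mem (t.indicator fun _ => (1:ℝ))) : X.Mem (s.indicator fun _ => (1:ℝ)) := by
  refine X.ideal_mem _ _ (Eventually.of_forall fun x => ?_) ht
  by_cases hx : x ∈ s
  · simp [hx, hst hx]
  · simp [hx]

end BanachFunctionSpace

lemma ae_restrict_pos_of_subset_Ici {I : Set ℝ} (hI : I ⊆ Ici 0) :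
    ∀ᵐ t ∂volume.restrict I, 0 < t :=
  ae_restrict_of_ae_restrict_of_subset hI <| by
    rw [← Measure.restrict_congr_set Ioi_ae_eq_Ici]
    exact ae_restrict_mem measurableSet_Ioi

lemma exists_mem_Ioo_of_ae_restrict {I : Set ℝ} {l u : ℝ} (hlu : l < u) (hI : Ioo l u ⊆ I)
    {p : ℝ → Prop} (h : ∀ᵐ x ∂volume.restrict I, p x) : ∃ x ∈ Ioo l u, p x :=
  Measure.exists_mem_of_measure_ne_zero_of_ae (by simp [hlu])
    (ae_restrict_of_ae_restrict_of_subset hI h)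

section Copson

variable {I : Set ℝ} {f : ℝ → ℝ}

lemma cop_eq_setLIntegral_Ici (x : ℝ) :
    cop I f x = ∫⁻ t in Ici x, ENNReal.ofReal (|f t| / t) ∂volume.restrict I := by
  rw [cop, Measure.restrict_restrict measurableSet_Ici, inter_comm]

lemma cop_antitone : Antitone (cop I f) := fun _ _ hxy =>
  lintegral_mono_set (inter_subset_inter_right _ (Ici_subset_Ici.mpr hxy))

lemma cop_le_lintegral (x : ℝ) : cop I f x ≤ ∫⁻ t in I, ENNReal.ofReal (|f t| / t) :=
  lintegral_mono_set inter_subset_left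

lemma cop_eq_lintegral_of_support_subset {a x : ℝ} (hf : support f ⊆ Ici a) (hx : x ≤ a) :
    cop I f x = ∫⁻ t in I, ENNReal.ofReal (|f t| / t) := by
  rw [cop_eq_setLIntegral_Ici, setLIntegral_eq_of_support_subset]
  exact fun t ht => hx.trans (hf fun h => ht (by simp [h]))

lemma cop_eq_zero_of_support_subset {b x : ℝ} (hf : support f ⊆ Iic b) (hx : b < x) :
    cop I f x = 0 := by
  rw [cop_eq_setLIntegral_Ici]
  refine setLIntegral_eq_zero measurableSet_Ici fun t ht => ?_
  have : f t = 0 := notMem_support.mp fun h => (hx.trans_le ht).not_ge (hf h)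
  simp [this]

lemma ae_eq_zero_of_cop_eq_zero (hI : I ⊆ Ici 0) (hf : Measurable f)
    (h : ∀ x > 0, cop I f x = 0) : ∀ᵐ t ∂volume.restrict I, f t = 0 := by
  have hvanish : ∀ n : ℕ, ∀ᵐ t ∂volume.restrict I,
      t ∈ Ici (1 / (n + 1) : ℝ) → ENNReal.ofReal (|f t| / t) = 0 := fun n => by
    rw [← setLIntegral_eq_zero_iff measurableSet_Ici (by fun_prop),
      ← cop_eq_setLIntegral_Ici]
    exact h _ Nat.one_div_pos_of_nat
  filter_upwards [ae_all_iff.mpr hvanish, ae_restrict_pos_of_subset_Ici hI] with t hvan ht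
  obtain ⟨n, hn⟩ := exists_nat_one_div_lt ht
  have := hvan n hn.le
  rw [ENNReal.ofReal_eq_zero, div_le_iff₀ ht, zero_mul] at this
  exact abs_nonpos_iff.mp this

lemma lintegral_ne_top_of_ae_cop_ne_top {a : ℝ} (ha : 0 < a) (hI : Ioo 0 a ⊆ I)
    (hf : support f ⊆ Ici a) (h : ∀ᵐ x ∂volume.restrict I, cop I f x ≠ ⊤) :
    ∫⁻ t in I, ENNReal.ofReal (|f t| / t) ≠ ⊤ := by
  obtain ⟨x, hx, hx_fin⟩ := exists_mem_Ioo_of_ae_restrict ha hI h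
  rwa [← cop_eq_lintegral_of_support_subset hf hx.2.le]

variable (X : BanachFunctionSpace I)

lemma mem_indicator_Icc_of_cop_pos (hf : MemCopX I X f) {b : ℝ} (hpos : 0 < cop I f b)
    (hfin : cop I f b ≠ ⊤) : X.Mem ((Icc (0:ℝ) b).indicator fun _ => (1:ℝ)) := by
  have hc : 0 < (cop I f b).toReal := ENNReal.toReal_pos hpos.ne' hfin
  refine X.mem_of_smul_mem hc.ne' (X.ideal_mem _ _ ?_ hf.2)
  filter_upwards [hf.1] with x hx
  by_cases hxb : x ∈ Icc 0 b
  · simp only [Pi.smul_apply, indicator_of_mem hxb, smul_eq_mul, mul_one, copR,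
      abs_of_pos hc, ENNReal.abs_toReal]
    exact ENNReal.toReal_mono hx (cop_antitone hxb.2)
  · simp [hxb]

lemma norm_indicator_mul_le_norm_copR (hf : X.Mem (copR I f)) {a : ℝ}
    (hsupp : support f ⊆ Ici a) :
    X.norm ((Icc (0:ℝ) a).indicator fun _ => (1:ℝ)) *
      (∫⁻ t in I, ENNReal.ofReal (|f t| / t)).toReal ≤ X.norm (copR I f) := by
  rw [mul_comm, ← X.norm_smul_of_nonneg ENNReal.toReal_nonneg]
  refine X.ideal_norm _ _ (Eventually.of_forall fun x => ?_) hf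
  by_cases hx : x ∈ Icc 0 a
  · simp [hx, copR, cop_eq_lintegral_of_support_subset hsupp hx.2]
  · simp [hx]

lemma norm_copR_le_norm_indicator_mul (hI : I ⊆ Ici 0) {b : ℝ}
    (hχ : X.Mem ((Icc (0:ℝ) b).indicator fun _ => (1:ℝ))) (hsupp : support f ⊆ Iic b)
    (hfin : ∫⁻ t in I, ENNReal.ofReal (|f t| / t) ≠ ⊤) :
    X.norm (copR I f) ≤ X.norm ((Icc (0:ℝ) b).indicator fun _ => (1:ℝ)) *
      (∫⁻ t in I, ENNReal.ofReal (|f t| / t)).toReal := by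
  rw [mul_comm, ← X.norm_smul_of_nonneg ENNReal.toReal_nonneg]
  refine X.ideal_norm _ _ ?_ (X.smul_mem _ _ hχ)
  filter_upwards [ae_restrict_pos_of_subset_Ici hI] with x hx
  by_cases hxb : x ≤ b
  · have hxb' : x ∈ Icc 0 b := ⟨hx.le, hxb⟩
    simp only [Pi.smul_apply, indicator_of_mem hxb', smul_eq_mul, mul_one, copR,
      ENNReal.abs_toReal]
    exact ENNReal.toReal_mono hfin (cop_le_lintegral x)
  · simp only [copR, cop_eq_zero_of_support_subset hsupp (not_le.mp hxb), ENNReal.toReal_zero,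
      abs_zero]
    positivity

end Copson

/-- Lemma 4.2: if `C*X ≠ {0}`, there are `0 < a < b < m(I)` such that for all `f ∈ C*X`
supported in `[a,b]`:
`‖χ_{[0,a]}‖_X ‖f‖_{L¹(1/t)} ≤ ‖f‖_{C*X} ≤ ‖χ_{[0,b]}‖_X ‖f‖_{L¹(1/t)}`. -/
theorem copson_middle_L1 (I : Set ℝ) (hI : I = Set.Icc 0 1 ∨ I = Set.Ici 0)
    (X : BanachFunctionSpace I)
    (hne : ∃ f : ℝ → ℝ, Measurable f ∧ MemCopX I X f ∧
        ¬ (∀ᵐ x ∂(volume.restrict I), f x = 0)) :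
    ∃ a b : ℝ, 0 < a ∧ a < b ∧ b ∈ interior I ∧
      X.Mem ((Set.Icc (0:ℝ) a).indicator fun _ => (1:ℝ)) ∧
      X.Mem ((Set.Icc (0:ℝ) b).indicator fun _ => (1:ℝ)) ∧
      ∀ f : ℝ → ℝ, Measurable f → MemCopX I X f → Function.support f ⊆ Set.Icc a b →
        X.norm ((Set.Icc (0:ℝ) a).indicator fun _ => (1:ℝ)) *
            (∫⁻ t in I, ENNReal.ofReal (|f t| / t)).toReal ≤ X.norm (copR I f) ∧
        X.norm (copR I f) ≤
          X.norm ((Set.Icc (0:ℝ) b).indicator fun _ => (1:ℝ)) *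
            (∫⁻ t in I, ENNReal.ofReal (|f t| / t)).toReal := by
  obtain ⟨f₀, hf₀, hf₀X, hf₀_ne⟩ := hne
  have hI_nonneg : I ⊆ Ici 0 := by
    rcases hI with rfl | rfl
    exacts [fun x hx => hx.1, subset_rfl]
  have hI_unit : Ioo 0 1 ⊆ I := by
    rcases hI with rfl | rfl
    exacts [Ioo_subset_Icc_self, Ioo_subset_Ioi_self.trans Ioi_subset_Ici_self]
  obtain ⟨x₀, hx₀, hcop₀⟩ : ∃ x₀ > 0, 0 < cop I f₀ x₀ := by
    by_contra! h
    exact hf₀_ne <| ae_eq_zero_of_cop_eq_zero hI_nonneg hf₀ fun x hx =>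
      nonpos_iff_eq_zero.mp (h x hx)
  obtain ⟨b, ⟨hb, hbx₀⟩, hb_fin⟩ := exists_mem_Ioo_of_ae_restrict (lt_min hx₀ one_pos)
    ((Ioo_subset_Ioo_right (min_le_right _ _)).trans hI_unit) hf₀X.1
  have hχb := mem_indicator_Icc_of_cop_pos X hf₀X
    (hcop₀.trans_le (cop_antitone (hbx₀.le.trans (min_le_left _ _)))) hb_fin
  have hb_one : b < 1 := hbx₀.trans_le (min_le_right _ _)
  refine ⟨b / 2, b, half_pos hb, half_lt_self hb, ?_, ?_, hχb, fun f _ hf hsupp => ⟨?_, ?_⟩⟩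
  · exact interior_mono hI_unit (by rw [interior_Ioo]; exact ⟨hb, hb_one⟩)
  · exact X.mem_indicator_one_of_subset (Icc_subset_Icc_right (half_le_self hb.le)) hχb
  · exact norm_indicator_mul_le_norm_copR X hf.2 (hsupp.trans Icc_subset_Ici_self)
  · have hf_fin := lintegral_ne_top_of_ae_cop_ne_top (half_pos hb)
      ((Ioo_subset_Ioo_right (by linarith)).trans hI_unit) (hsupp.trans Icc_subset_Ici_self) hf.1
    exact norm_copR_le_norm_indicator_mul X hI_nonneg hχb (hsupp.trans Icc_subset_Iic_self) hf_fin
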